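/- arXiv:0812.2376 — 3 statements merged into one kernel-verified Lean document; each statement's English description precedes it below -/
import Mathlib

section
/- Let N ≥ 1, k ≥ 2, and let Ω ⊆ ℝ^N be an open set of finite Lebesgue measure |Ω|. For each i = 1,…,k let F_i : ℝ → ℝ be continuous with F_i(0) = 0 and satisfying (F2) with constants A_i > 0 and μ_i. Set μ* := max_{1≤i≤k} μ_i and let i₀ be an index attaining this maximum. Then: (a) for every segregated k-tuple U = (u_1,…,u_k) of differentiable functions u_i : ℝ^N → ℝ with |∇u_i|², u_i², and F_i(u_i) integrable on Ω, one has J_Ω(U) ≥ −μ*·|Ω|; (b) the k-tuple U₀ with (U₀)_{i₀} ≡ A_{i₀} and (U₀)_i ≡ 0 for i ≠ i₀ satisfies J_Ω(U₀) = −μ*·|Ω|; (c) if moreover ∫_Ω |∇u_j|² dx > 0 for some index j, then the inequality in (a) is strict: J_Ω(U) > −μ*·|Ω|. -/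
/-!
At every point a segregated tuple has at most one nonzero entry, so by (F2) and `F i 0 = 0` the
potential part `∑ i, (u_i² / 2 - F_i(u_i))` is pointwise at least `-μ*`; integrating over `Ω` gives
`-μ* |Ω|`, and the gradient part is nonnegative, positive as soon as one gradient is nontrivial.
The constant tuple has no gradient and realizes the pointwise bound with equality.
-/

open MeasureTheory Set

theorem exists_forall_ne_eq_zero_of_mul_eq_zero {ι M₀ : Type*} [MulZeroClass M₀]
    [NoZeroDivisors M₀] [Nonempty ι] {t : ι → M₀} (ht : ∀ i j, i ≠ j → t i * t j = 0) :
    ∃ m, ∀ i ≠ m, t i = 0 := by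
  by_cases hzero : ∀ i, t i = 0
  · exact ⟨Classical.arbitrary ι, fun i _ => hzero i⟩
  · push Not at hzero
    obtain ⟨m, hm⟩ := hzero
    exact ⟨m, fun i hi => (mul_eq_zero.mp (ht i m hi)).resolve_right hm⟩

section Segregated

variable {ι : Type*} [Fintype ι] [Nonempty ι] {h : ι → ℝ → ℝ} {M : ℝ}

theorem le_sum_apply_of_mul_eq_zero (h0 : ∀ i, h i 0 = 0) (hM : ∀ i s, 0 ≤ s → M ≤ h i s)
    {t : ι → ℝ} (ht : ∀ i, 0 ≤ t i) (hseg : ∀ i j, i ≠ j → t i * t j = 0) :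
    M ≤ ∑ i, h i (t i) := by
  obtain ⟨m, hm⟩ := exists_forall_ne_eq_zero_of_mul_eq_zero hseg
  rw [Fintype.sum_eq_single m fun i hi => by rw [hm i hi, h0]]
  exact hM m _ (ht m)

variable {α : Type*} [MeasurableSpace α] {ν : Measure α} [IsFiniteMeasure ν] {u : ι → α → ℝ}

theorem le_sum_integral_of_ae_mul_eq_zero (h0 : ∀ i, h i 0 = 0)
    (hM : ∀ i s, 0 ≤ s → M ≤ h i s) (hint : ∀ i, Integrable (fun x => h i (u i x)) ν)
    (hnn : ∀ i, ∀ᵐ x ∂ν, 0 ≤ u i x) (hseg : ∀ i j, i ≠ j → ∀ᵐ x ∂ν, u i x * u j x = 0) :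
    M * ν.real univ ≤ ∑ i, ∫ x, h i (u i x) ∂ν := by
  have hseg_ae : ∀ᵐ x ∂ν, ∀ i j, i ≠ j → u i x * u j x = 0 := by
    refine ae_all_iff.2 fun i => ae_all_iff.2 fun j => ?_
    rcases eq_or_ne i j with hij | hij
    · exact .of_forall fun _ hne => absurd hij hne
    · exact (hseg i j hij).mono fun _ hx _ => hx
  rw [← integral_finsetSum _ fun i _ => hint i, mul_comm, ← smul_eq_mul, ← integral_const]
  refine integral_mono_ae (integrable_const M) (integrable_finsetSum _ fun i _ => hint i) ?_
  filter_upwards [ae_all_iff.2 hnn, hseg_ae] with x hx hsegx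
  exact le_sum_apply_of_mul_eq_zero h0 hM hx hsegx

theorem le_sum_integral_half_add_of_ae_mul_eq_zero {g : ι → α → ℝ} (hg : ∀ i, Integrable (g i) ν)
    (h0 : ∀ i, h i 0 = 0) (hM : ∀ i s, 0 ≤ s → M ≤ h i s)
    (hint : ∀ i, Integrable (fun x => h i (u i x)) ν)
    (hnn : ∀ i, ∀ᵐ x ∂ν, 0 ≤ u i x) (hseg : ∀ i j, i ≠ j → ∀ᵐ x ∂ν, u i x * u j x = 0) :
    M * ν.real univ + 1 / 2 * ∑ i, ∫ x, g i x ∂ν ≤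
      ∑ i, ∫ x, (1 / 2 * g i x + h i (u i x)) ∂ν := by
  simp only [fun i => integral_add ((hg i).const_mul (1 / 2)) (hint i), integral_const_mul,
    Finset.sum_add_distrib, Finset.mul_sum]
  linarith [le_sum_integral_of_ae_mul_eq_zero h0 hM hint hnn hseg]

end Segregated

theorem stmt_0_general
    {N k : ℕ}
    (Ω : Set (EuclideanSpace ℝ (Fin N)))
    (hΩfin : volume Ω < ⊤)
    (F : Fin k → ℝ → ℝ)
    (hF0 : ∀ i, F i 0 = 0)
    (A : Fin k → ℝ)
    (μ : Fin k → ℝ) (hμ : ∀ i, μ i = F i (A i) - (A i) ^ 2 / 2)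
    (hF2 : ∀ i, ∀ t : ℝ, 0 ≤ t → F i t - t ^ 2 / 2 ≤ μ i)
    (i₀ : Fin k) (hi₀ : ∀ i, μ i ≤ μ i₀) :
    -- (a)
    (∀ u : Fin k → EuclideanSpace ℝ (Fin N) → ℝ,
      (∀ i, Differentiable ℝ (u i)) →
      (∀ i, IntegrableOn (fun x => ‖fderiv ℝ (u i) x‖ ^ 2) Ω) →
      (∀ i, IntegrableOn (fun x => (u i x) ^ 2) Ω) →
      (∀ i, IntegrableOn (fun x => F i (u i x)) Ω) →
      (∀ i, ∀ᵐ x ∂(volume.restrict Ω), 0 ≤ u i x) →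
      (∀ i j, i ≠ j → ∀ᵐ x ∂(volume.restrict Ω), u i x * u j x = 0) →
      -(μ i₀) * (volume Ω).toReal ≤
        ∑ i, ∫ x in Ω,
          (1 / 2 * ‖fderiv ℝ (u i) x‖ ^ 2 + 1 / 2 * (u i x) ^ 2 - F i (u i x)))
    ∧
    -- (b)
    (∑ i, ∫ x in Ω,
        (1 / 2 * ‖fderiv ℝ (fun _ : EuclideanSpace ℝ (Fin N) =>
            if i = i₀ then A i₀ else 0) x‖ ^ 2
          + 1 / 2 * ((if i = i₀ then A i₀ else 0) : ℝ) ^ 2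
          - F i (if i = i₀ then A i₀ else 0))
      = -(μ i₀) * (volume Ω).toReal)
    ∧
    -- (c)
    (∀ u : Fin k → EuclideanSpace ℝ (Fin N) → ℝ,
      (∀ i, Differentiable ℝ (u i)) →
      (∀ i, IntegrableOn (fun x => ‖fderiv ℝ (u i) x‖ ^ 2) Ω) →
      (∀ i, IntegrableOn (fun x => (u i x) ^ 2) Ω) →
      (∀ i, IntegrableOn (fun x => F i (u i x)) Ω) →
      (∀ i, ∀ᵐ x ∂(volume.restrict Ω), 0 ≤ u i x) →
      (∀ i j, i ≠ j → ∀ᵐ x ∂(volume.restrict Ω), u i x * u j x = 0) →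
      (∃ j, 0 < ∫ x in Ω, ‖fderiv ℝ (u j) x‖ ^ 2) →
      -(μ i₀) * (volume Ω).toReal <
        ∑ i, ∫ x in Ω,
          (1 / 2 * ‖fderiv ℝ (u i) x‖ ^ 2 + 1 / 2 * (u i x) ^ 2 - F i (u i x))) := by
  have : Nonempty (Fin k) := ⟨i₀⟩
  have : IsFiniteMeasure (volume.restrict Ω) := isFiniteMeasure_restrict.2 hΩfin.ne
  have hpot : ∀ i s, 0 ≤ s → -μ i₀ ≤ 1 / 2 * s ^ 2 - F i s := fun i s hs => by
    linarith [hF2 i s hs, hi₀ i]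
  have henergy : ∀ u : Fin k → EuclideanSpace ℝ (Fin N) → ℝ,
      (∀ i, IntegrableOn (fun x => ‖fderiv ℝ (u i) x‖ ^ 2) Ω) →
      (∀ i, IntegrableOn (fun x => (u i x) ^ 2) Ω) →
      (∀ i, IntegrableOn (fun x => F i (u i x)) Ω) →
      (∀ i, ∀ᵐ x ∂(volume.restrict Ω), 0 ≤ u i x) →
      (∀ i j, i ≠ j → ∀ᵐ x ∂(volume.restrict Ω), u i x * u j x = 0) →
      -μ i₀ * (volume Ω).toReal + 1 / 2 * ∑ i, ∫ x in Ω, ‖fderiv ℝ (u i) x‖ ^ 2 ≤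
        ∑ i, ∫ x in Ω,
          (1 / 2 * ‖fderiv ℝ (u i) x‖ ^ 2 + 1 / 2 * (u i x) ^ 2 - F i (u i x)) := by
    intro u hgrad hsq hF hnn hseg
    simp only [add_sub_assoc]
    rw [← measureReal_def, ← measureReal_restrict_apply_univ]
    exact le_sum_integral_half_add_of_ae_mul_eq_zero hgrad (h := fun i s => 1 / 2 * s ^ 2 - F i s)
      (by simp [hF0]) hpot (fun i => ((hsq i).const_mul _).sub (hF i)) hnn hseg
  have hgrad_nonneg : ∀ (u : Fin k → EuclideanSpace ℝ (Fin N) → ℝ) i,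
      0 ≤ ∫ x in Ω, ‖fderiv ℝ (u i) x‖ ^ 2 := fun u i => integral_nonneg fun x => by positivity
  refine ⟨fun u _ hgrad hsq hF hnn hseg => ?_, ?_, fun u _ hgrad hsq hF hnn hseg hj => ?_⟩
  · linarith [henergy u hgrad hsq hF hnn hseg,
      Finset.sum_nonneg fun i (_ : i ∈ Finset.univ) => hgrad_nonneg u i]
  · rw [Fintype.sum_eq_single i₀ fun i hi => by simp [hi, hF0]]
    simp [hμ, measureReal_def]
    ring
  · obtain ⟨j, hj⟩ := hj
    linarith [henergy u hgrad hsq hF hnn hseg,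
      Finset.sum_pos' (fun i _ => hgrad_nonneg u i) ⟨j, Finset.mem_univ j, hj⟩]

/-- Triviality of global minimizers: (a) the free energy of any segregated
`k`-tuple is bounded below by `-μ* |Ω|`; (b) the trivial `k`-tuple with the
`i₀`-th component constantly `A i₀` and the others zero attains this value;
(c) if some component has a nontrivial gradient, the inequality is strict. -/
theorem stmt_0
    {N k : ℕ} (hN : 1 ≤ N) (hk : 2 ≤ k)
    (Ω : Set (EuclideanSpace ℝ (Fin N))) (hΩopen : IsOpen Ω)
    (hΩfin : volume Ω < ⊤)
    (F : Fin k → ℝ → ℝ) (hFcont : ∀ i, Continuous (F i))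
    (hF0 : ∀ i, F i 0 = 0)
    (A : Fin k → ℝ) (hA : ∀ i, 0 < A i)
    (μ : Fin k → ℝ) (hμ : ∀ i, μ i = F i (A i) - (A i) ^ 2 / 2)
    (hF2 : ∀ i, ∀ t : ℝ, 0 ≤ t → F i t - t ^ 2 / 2 ≤ μ i)
    (i₀ : Fin k) (hi₀ : ∀ i, μ i ≤ μ i₀) :
    -- (a)
    (∀ u : Fin k → EuclideanSpace ℝ (Fin N) → ℝ,
      (∀ i, Differentiable ℝ (u i)) →
      (∀ i, IntegrableOn (fun x => ‖fderiv ℝ (u i) x‖ ^ 2) Ω) →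
      (∀ i, IntegrableOn (fun x => (u i x) ^ 2) Ω) →
      (∀ i, IntegrableOn (fun x => F i (u i x)) Ω) →
      (∀ i, ∀ᵐ x ∂(volume.restrict Ω), 0 ≤ u i x) →
      (∀ i j, i ≠ j → ∀ᵐ x ∂(volume.restrict Ω), u i x * u j x = 0) →
      -(μ i₀) * (volume Ω).toReal ≤
        ∑ i, ∫ x in Ω,
          (1 / 2 * ‖fderiv ℝ (u i) x‖ ^ 2 + 1 / 2 * (u i x) ^ 2 - F i (u i x)))
    ∧
    -- (b)
    (∑ i, ∫ x in Ω,
        (1 / 2 * ‖fderiv ℝ (fun _ : EuclideanSpace ℝ (Fin N) =>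
            if i = i₀ then A i₀ else 0) x‖ ^ 2
          + 1 / 2 * ((if i = i₀ then A i₀ else 0) : ℝ) ^ 2
          - F i (if i = i₀ then A i₀ else 0))
      = -(μ i₀) * (volume Ω).toReal)
    ∧
    -- (c)
    (∀ u : Fin k → EuclideanSpace ℝ (Fin N) → ℝ,
      (∀ i, Differentiable ℝ (u i)) →
      (∀ i, IntegrableOn (fun x => ‖fderiv ℝ (u i) x‖ ^ 2) Ω) →
      (∀ i, IntegrableOn (fun x => (u i x) ^ 2) Ω) →
      (∀ i, IntegrableOn (fun x => F i (u i x)) Ω) →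
      (∀ i, ∀ᵐ x ∂(volume.restrict Ω), 0 ≤ u i x) →
      (∀ i j, i ≠ j → ∀ᵐ x ∂(volume.restrict Ω), u i x * u j x = 0) →
      (∃ j, 0 < ∫ x in Ω, ‖fderiv ℝ (u j) x‖ ^ 2) →
      -(μ i₀) * (volume Ω).toReal <
        ∑ i, ∫ x in Ω,
          (1 / 2 * ‖fderiv ℝ (u i) x‖ ^ 2 + 1 / 2 * (u i x) ^ 2 - F i (u i x))) :=
  stmt_0_general Ω hΩfin F hF0 A μ hμ hF2 i₀ hi₀
end

section
/- Let N ≥ 1, k ≥ 2, and let Ω ⊆ ℝ^N be a measurable set of finite Lebesgue measure |Ω|. For each i = 1,…,k let F_i : ℝ → ℝ be continuous with F_i(0) = 0 and satisfying (F2) with constant A_i > 0, and let F̃_i, G_i be the associated truncations. Then for every κ ≥ 0 and every k-tuple U = (u_1,…,u_k) of differentiable functions u_i : ℝ^N → ℝ with |∇u_i|², u_i², F̃_i(u_i), and G_i(u_i)·G_j(u_j) integrable on Ω, one has I_κ(U) ≥ Σ_{i=1}^k (A_i²/2 − F_i(A_i))·|Ω|. -/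
open MeasureTheory

/-- The truncated potential `F̃`. -/
noncomputable def truncPotential (F : ℝ → ℝ) (A : ℝ) (t : ℝ) : ℝ :=
  if t ≤ 0 then 0 else if t ≤ A then F t else A * t + F A - A ^ 2

/-- The truncated coupling `G`. -/
noncomputable def truncCoupling (A : ℝ) (t : ℝ) : ℝ :=
  if |t| ≤ A then t ^ 2 else 2 * A * |t| - A ^ 2

/-!
Pointwise, `F̃_i(t) - t²/2 ≤ F_i(A_i) - A_i²/2` for every real `t`: for `0 < t ≤ A_i` this is (F2),
for `t ≤ 0` it is (F2) at `t = 0`, and beyond `A_i` the truncation is the tangent line of `t²/2`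
at `A_i` shifted by `F_i(A_i) - A_i²/2`. Integrating over `Ω` bounds each one-component energy
from below by `(A_i²/2 - F_i(A_i))|Ω|`, and the coupling term is nonnegative since `G_i ≥ 0`.
-/

lemma truncCoupling_nonneg {A : ℝ} (hA : 0 ≤ A) (t : ℝ) : 0 ≤ truncCoupling A t := by
  unfold truncCoupling
  split_ifs with h
  · positivity
  · nlinarith [abs_nonneg t, not_le.mp h]

lemma truncPotential_sub_sq_le {F : ℝ → ℝ} {A : ℝ} (hF0 : F 0 = 0)
    (hF2 : ∀ t : ℝ, 0 ≤ t → F t - t ^ 2 / 2 ≤ F A - A ^ 2 / 2) (t : ℝ) :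
    truncPotential F A t - t ^ 2 / 2 ≤ F A - A ^ 2 / 2 := by
  have hmax_nonneg : 0 ≤ F A - A ^ 2 / 2 := by simpa [hF0] using hF2 0 le_rfl
  unfold truncPotential
  split_ifs with hpos hle
  · nlinarith
  · exact hF2 t (le_of_not_ge hpos)
  · nlinarith [sq_nonneg (t - A)]

theorem stmt_9_general
    {N k : ℕ}
    (Ω : Set (EuclideanSpace ℝ (Fin N)))
    (hΩfin : volume Ω < ⊤)
    (F : Fin k → ℝ → ℝ)
    (hF0 : ∀ i, F i 0 = 0)
    (A : Fin k → ℝ) (hA : ∀ i, 0 < A i)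
    (hF2 : ∀ i, ∀ t : ℝ, 0 ≤ t → F i t - t ^ 2 / 2 ≤ F i (A i) - (A i) ^ 2 / 2)
    (κ : ℝ) (hκ : 0 ≤ κ)
    (u : Fin k → EuclideanSpace ℝ (Fin N) → ℝ)
    (hgradint : ∀ i, IntegrableOn (fun x => ‖fderiv ℝ (u i) x‖ ^ 2) Ω)
    (husqint : ∀ i, IntegrableOn (fun x => (u i x) ^ 2) Ω)
    (hFtint : ∀ i, IntegrableOn (fun x => truncPotential (F i) (A i) (u i x)) Ω) :
    (∑ i, ((A i) ^ 2 / 2 - F i (A i))) * (volume Ω).toReal ≤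
      (∑ i, ∫ x in Ω,
          (1 / 2 * ‖fderiv ℝ (u i) x‖ ^ 2 + 1 / 2 * (u i x) ^ 2
            - truncPotential (F i) (A i) (u i x)))
        + κ * ∑ i, ∑ j ∈ Finset.univ.erase i, ∫ x in Ω,
            truncCoupling (A i) (u i x) * truncCoupling (A j) (u j x) := by
  have hcoupling : 0 ≤ κ * ∑ i, ∑ j ∈ Finset.univ.erase i, ∫ x in Ω,
      truncCoupling (A i) (u i x) * truncCoupling (A j) (u j x) :=
    mul_nonneg hκ <| Finset.sum_nonneg fun i _ => Finset.sum_nonneg fun j _ =>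
      integral_nonneg fun x =>
        mul_nonneg (truncCoupling_nonneg (hA i).le _) (truncCoupling_nonneg (hA j).le _)
  refine le_add_of_le_of_nonneg ?_ hcoupling
  rw [Finset.sum_mul]
  refine Finset.sum_le_sum fun i _ => ?_
  rw [← measureReal_def, mul_comm, ← smul_eq_mul, ← setIntegral_const]
  refine setIntegral_mono (integrableOn_const hΩfin.ne)
    ((((hgradint i).const_mul _).add ((husqint i).const_mul _)).sub (hFtint i)) fun x => ?_
  have hpot := truncPotential_sub_sq_le (hF0 i) (hF2 i) (u i x)
  have hgrad : 0 ≤ ‖fderiv ℝ (u i) x‖ ^ 2 := by positivity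
  linarith

/-- Lower bound for the penalized energy:
`I_κ(U) ≥ Σ_i (A_i²/2 − F_i(A_i)) |Ω|` for all `κ ≥ 0`. -/
theorem stmt_9
    {N k : ℕ} (hN : 1 ≤ N) (hk : 2 ≤ k)
    (Ω : Set (EuclideanSpace ℝ (Fin N))) (hΩ : MeasurableSet Ω)
    (hΩfin : volume Ω < ⊤)
    (F : Fin k → ℝ → ℝ) (hFcont : ∀ i, Continuous (F i))
    (hF0 : ∀ i, F i 0 = 0)
    (A : Fin k → ℝ) (hA : ∀ i, 0 < A i)
    (hF2 : ∀ i, ∀ t : ℝ, 0 ≤ t → F i t - t ^ 2 / 2 ≤ F i (A i) - (A i) ^ 2 / 2)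
    (κ : ℝ) (hκ : 0 ≤ κ)
    (u : Fin k → EuclideanSpace ℝ (Fin N) → ℝ)
    (hu : ∀ i, Differentiable ℝ (u i))
    (hgradint : ∀ i, IntegrableOn (fun x => ‖fderiv ℝ (u i) x‖ ^ 2) Ω)
    (husqint : ∀ i, IntegrableOn (fun x => (u i x) ^ 2) Ω)
    (hFtint : ∀ i, IntegrableOn (fun x => truncPotential (F i) (A i) (u i x)) Ω)
    (hGint : ∀ i j, i ≠ j →
      IntegrableOn
        (fun x => truncCoupling (A i) (u i x) * truncCoupling (A j) (u j x)) Ω) :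
    (∑ i, ((A i) ^ 2 / 2 - F i (A i))) * (volume Ω).toReal ≤
      (∑ i, ∫ x in Ω,
          (1 / 2 * ‖fderiv ℝ (u i) x‖ ^ 2 + 1 / 2 * (u i x) ^ 2
            - truncPotential (F i) (A i) (u i x)))
        + κ * ∑ i, ∑ j ∈ Finset.univ.erase i, ∫ x in Ω,
            truncCoupling (A i) (u i x) * truncCoupling (A j) (u j x) :=
  stmt_9_general Ω hΩfin F hF0 A hA hF2 κ hκ u hgradint husqint hFtint
end

section
/- Let N ≥ 1, k ≥ 2, and let Ω^1,…,Ω^k ⊂ ℝ^N be bounded open sets with pairwise disjoint closures; set Ω_0 := Ω^1 ∪ … ∪ Ω^k. For each i let F_i : ℝ → ℝ be continuous with F_i(0) = 0 and satisfying (F2) with constants A_i > 0 and μ_i := F_i(A_i) − A_i²/2. Let φ_1,…,φ_k : ℝ^N → ℝ be continuously differentiable functions such that 0 ≤ φ_i ≤ A_i and |∇φ_i| ≤ L_i everywhere, φ_i ≡ A_i on Ω^i, φ_i ≡ 0 on Ω^j for every j ≠ i, and φ_i·φ_j ≡ 0 on ℝ^N for i ≠ j. Let R ⊂ ℝ^N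 \ Ω_0 be a bounded measurable set and Ω_ε := Ω_0 ∪ R. Then J_{Ω_ε}(φ_1,…,φ_k) ≤ μ + M·|R|, where μ := −Σ_{i=1}^k μ_i·|Ω^i| and M := Σ_{i=1}^k (½L_i² + ½A_i² + sup_{t ∈ [0,A_i]} |F_i(t)|). -/
/-!
On each `Ωʲ` the profile `φᵢ` is constant (`Aᵢ` if `j = i`, `0` otherwise), so its gradient vanishes
there and the energy density of `φᵢ` equals `-μᵢ` on `Ωⁱ` and `0` on the other components. On the
remaining region `R` the density is bounded pointwise by `½Lᵢ² + ½Aᵢ² + sup_{[0,Aᵢ]} |Fᵢ|`, whence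
the `M |R|` term.
-/

open MeasureTheory Set Function

noncomputable def energyDensity {E : Type*} [NormedAddCommGroup E] [NormedSpace ℝ E]
    (F : ℝ → ℝ) (u : E → ℝ) (x : E) : ℝ :=
  1 / 2 * ‖fderiv ℝ u x‖ ^ 2 + 1 / 2 * (u x) ^ 2 - F (u x)

section EnergyDensity

variable {E : Type*} [NormedAddCommGroup E] [NormedSpace ℝ E] {F : ℝ → ℝ} {u : E → ℝ}

theorem continuous_energyDensity (hu : ContDiff ℝ 1 u) (hF : Continuous F) :
    Continuous (energyDensity F u) := by
  have hDu : Continuous (fderiv ℝ u) := hu.continuous_fderiv one_ne_zero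
  unfold energyDensity
  fun_prop

theorem fderiv_eq_zero_of_eqOn_const {s : Set E} {c : ℝ} {x : E} (hs : IsOpen s) (hx : x ∈ s)
    (hu : ∀ y ∈ s, u y = c) : fderiv ℝ u x = 0 :=
  (hasFDerivAt_zero_of_eventually_const c (Filter.eventuallyEq_of_mem (hs.mem_nhds hx) hu)).fderiv

theorem energyDensity_eq_of_eqOn_const {s : Set E} {c : ℝ} {x : E} (hs : IsOpen s) (hx : x ∈ s)
    (hu : ∀ y ∈ s, u y = c) : energyDensity F u x = c ^ 2 / 2 - F c := by
  rw [energyDensity, fderiv_eq_zero_of_eqOn_const hs hx hu, hu x hx, norm_zero]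
  ring

theorem energyDensity_le {x : E} {L A : ℝ} (hF : Continuous F) (hDu : ‖fderiv ℝ u x‖ ≤ L)
    (hu₀ : 0 ≤ u x) (huA : u x ≤ A) :
    energyDensity F u x ≤ 1 / 2 * L ^ 2 + 1 / 2 * A ^ 2 + sSup ((fun t => |F t|) '' Icc 0 A) := by
  have hgrad : ‖fderiv ℝ u x‖ ^ 2 ≤ L ^ 2 := pow_le_pow_left₀ (norm_nonneg _) hDu 2
  have hval : u x ^ 2 ≤ A ^ 2 := pow_le_pow_left₀ hu₀ huA 2
  have hbdd : BddAbove ((fun t => |F t|) '' Icc 0 A) :=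
    (isCompact_Icc.image (continuous_abs.comp hF)).bddAbove
  have hFu : -F (u x) ≤ sSup ((fun t => |F t|) '' Icc 0 A) :=
    (neg_le_abs _).trans (le_csSup hbdd ⟨u x, ⟨hu₀, huA⟩, rfl⟩)
  rw [energyDensity]
  linarith

end EnergyDensity

section SetIntegral

variable {α : Type*} [MeasurableSpace α] {μ : Measure α}

theorem Continuous.integrableOn_of_isBounded [MetricSpace α] [ProperSpace α]
    [OpensMeasurableSpace α] [IsFiniteMeasureOnCompacts μ] {E : Type*} [NormedAddCommGroup E]
    {f : α → E} {s : Set α} (hf : Continuous f) (hs : Bornology.IsBounded s) :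
    IntegrableOn f s μ :=
  (hf.continuousOn.integrableOn_compact hs.isCompact_closure).mono_set subset_closure

theorem setIntegral_le_mul_measureReal {f : α → ℝ} {s : Set α} {C : ℝ} (hs : MeasurableSet s)
    (hμs : μ s ≠ ⊤) (hf : IntegrableOn f s μ) (hC : ∀ x ∈ s, f x ≤ C) :
    ∫ x in s, f x ∂μ ≤ C * μ.real s := by
  calc ∫ x in s, f x ∂μ ≤ ∫ _ in s, C ∂μ := setIntegral_mono_on hf (integrableOn_const hμs) hs hC
    _ = C * μ.real s := by rw [setIntegral_const, smul_eq_mul, mul_comm]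

theorem setIntegral_iUnion_of_eqOn_const {ι : Type*} [Fintype ι] {E : Type*}
    [NormedAddCommGroup E] [NormedSpace ℝ E] [CompleteSpace E] {f : α → E} {s : ι → Set α}
    (hs : ∀ j, MeasurableSet (s j)) (hd : Pairwise (Disjoint on s)) (hμs : ∀ j, μ (s j) ≠ ⊤)
    {c : ι → E} (hf : ∀ j, EqOn f (fun _ => c j) (s j)) :
    ∫ x in ⋃ j, s j, f x ∂μ = ∑ j, μ.real (s j) • c j := by
  have hint : ∀ j, IntegrableOn f (s j) μ := fun j =>
    (integrableOn_const (hμs j)).congr_fun (hf j).symm (hs j)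
  rw [integral_iUnion_fintype hs hd hint]
  exact Finset.sum_congr rfl fun j _ => by rw [setIntegral_congr_fun (hs j) (hf j), setIntegral_const]

end SetIntegral

theorem setIntegral_energyDensity_le {E : Type*} [NormedAddCommGroup E] [NormedSpace ℝ E]
    [MeasurableSpace E] [OpensMeasurableSpace E] [ProperSpace E] {μ : Measure E}
    [IsFiniteMeasureOnCompacts μ] {F : ℝ → ℝ} {u : E → ℝ} {ι : Type*} [Fintype ι]
    {s : ι → Set E} {i : ι} {R : Set E} {A L : ℝ}
    (hs_open : ∀ j, IsOpen (s j)) (hs_bdd : ∀ j, Bornology.IsBounded (s j))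
    (hs_disj : Pairwise (Disjoint on s)) (hF : Continuous F) (hF0 : F 0 = 0)
    (hu : ContDiff ℝ 1 u) (hu_bd : ∀ x, 0 ≤ u x ∧ u x ≤ A) (hDu : ∀ x, ‖fderiv ℝ u x‖ ≤ L)
    (hu_i : ∀ x ∈ s i, u x = A) (hu_j : ∀ j ≠ i, ∀ x ∈ s j, u x = 0)
    (hR : MeasurableSet R) (hR_bdd : Bornology.IsBounded R) (hR_disj : Disjoint (⋃ j, s j) R) :
    ∫ x in (⋃ j, s j) ∪ R, energyDensity F u x ∂μ ≤ (A ^ 2 / 2 - F A) * μ.real (s i)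
      + (1 / 2 * L ^ 2 + 1 / 2 * A ^ 2 + sSup ((fun t => |F t|) '' Icc 0 A)) * μ.real R := by
  classical
  have hcont := continuous_energyDensity hu hF
  have hvalue : ∀ j, EqOn (energyDensity F u) (fun _ => if j = i then A ^ 2 / 2 - F A else 0)
      (s j) := by
    intro j x hx
    split_ifs with hji
    · subst hji
      exact energyDensity_eq_of_eqOn_const (hs_open j) hx hu_i
    · rw [energyDensity_eq_of_eqOn_const (hs_open j) hx (hu_j j hji), hF0]
      ring
  have hR_le := setIntegral_le_mul_measureReal (μ := μ) hR hR_bdd.measure_lt_top.ne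
    (hcont.integrableOn_of_isBounded hR_bdd) fun x _ =>
      energyDensity_le hF (hDu x) (hu_bd x).1 (hu_bd x).2
  rw [setIntegral_union hR_disj hR
      (hcont.integrableOn_of_isBounded (Bornology.isBounded_iUnion.2 hs_bdd))
      (hcont.integrableOn_of_isBounded hR_bdd),
    setIntegral_iUnion_of_eqOn_const (fun j => (hs_open j).measurableSet) hs_disj
      (fun j => (hs_bdd j).measure_lt_top.ne) hvalue]
  simp only [smul_eq_mul, mul_ite, mul_zero, Finset.sum_ite_eq', Finset.mem_univ, if_true]
  linarith

theorem stmt_19_general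
    {N k : ℕ}
    (Ωi : Fin k → Set (EuclideanSpace ℝ (Fin N)))
    (hΩopen : ∀ i, IsOpen (Ωi i)) (hΩbdd : ∀ i, Bornology.IsBounded (Ωi i))
    (hΩdisj : ∀ i j, i ≠ j → Disjoint (closure (Ωi i)) (closure (Ωi j)))
    (Ω₀ : Set (EuclideanSpace ℝ (Fin N))) (hΩ₀ : Ω₀ = ⋃ i, Ωi i)
    (F : Fin k → ℝ → ℝ) (hFcont : ∀ i, Continuous (F i))
    (hF0 : ∀ i, F i 0 = 0)
    (A : Fin k → ℝ)
    (μi : Fin k → ℝ) (hμi : ∀ i, μi i = F i (A i) - (A i) ^ 2 / 2)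
    (φ : Fin k → EuclideanSpace ℝ (Fin N) → ℝ)
    (hφ : ∀ i, ContDiff ℝ 1 (φ i))
    (L : Fin k → ℝ)
    (hφbd : ∀ i, ∀ x, 0 ≤ φ i x ∧ φ i x ≤ A i)
    (hφgrad : ∀ i, ∀ x, ‖fderiv ℝ (φ i) x‖ ≤ L i)
    (hφKi : ∀ i, ∀ x ∈ Ωi i, φ i x = A i)
    (hφKj : ∀ i j, j ≠ i → ∀ x ∈ Ωi j, φ i x = 0)
    (R : Set (EuclideanSpace ℝ (Fin N))) (hR : MeasurableSet R)
    (hRbdd : Bornology.IsBounded R) (hRdisj : R ⊆ Ω₀ᶜ)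
    (Ωε : Set (EuclideanSpace ℝ (Fin N))) (hΩε : Ωε = Ω₀ ∪ R)
    (μ : ℝ) (hμ : μ = -∑ i, μi i * (volume (Ωi i)).toReal)
    (M : ℝ)
    (hM : M = ∑ i, (1 / 2 * (L i) ^ 2 + 1 / 2 * (A i) ^ 2
      + sSup ((fun t => |F i t|) '' Set.Icc 0 (A i)))) :
    (∑ i, ∫ x in Ωε,
        (1 / 2 * ‖fderiv ℝ (φ i) x‖ ^ 2 + 1 / 2 * (φ i x) ^ 2 - F i (φ i x)))
      ≤ μ + M * (volume R).toReal := by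
  subst hΩ₀ hΩε hμ hM
  have hdisj : Pairwise (Disjoint on Ωi) := fun i j hij =>
    (hΩdisj i j hij).mono subset_closure subset_closure
  calc _ ≤ ∑ i, ((A i ^ 2 / 2 - F i (A i)) * volume.real (Ωi i)
        + (1 / 2 * L i ^ 2 + 1 / 2 * A i ^ 2 + sSup ((fun t => |F i t|) '' Icc 0 (A i)))
          * volume.real R) :=
        Finset.sum_le_sum fun i _ => setIntegral_energyDensity_le hΩopen hΩbdd hdisj (hFcont i)
          (hF0 i) (hφ i) (hφbd i) (hφgrad i) (hφKi i) (fun j hji => hφKj i j hji) hR hRbdd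
          (subset_compl_iff_disjoint_left.mp hRdisj)
    _ = _ := by
      rw [Finset.sum_add_distrib, ← Finset.sum_mul, ← Finset.sum_neg_distrib]
      congr 1
      exact Finset.sum_congr rfl fun i _ => by rw [hμi, Measure.real]; ring

/-- Energy estimate for the segregated test configuration (Lemma 3.4):
`J_{Ω_ε}(φ_1,…,φ_k) ≤ μ + M |R|`, with `μ = −Σ_i μ_i |Ω^i|` and
`M = Σ_i (½L_i² + ½A_i² + sup_{[0,A_i]} |F_i|)`. -/
theorem stmt_19
    {N k : ℕ} (hN : 1 ≤ N) (hk : 2 ≤ k)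
    (Ωi : Fin k → Set (EuclideanSpace ℝ (Fin N)))
    (hΩopen : ∀ i, IsOpen (Ωi i)) (hΩbdd : ∀ i, Bornology.IsBounded (Ωi i))
    (hΩdisj : ∀ i j, i ≠ j → Disjoint (closure (Ωi i)) (closure (Ωi j)))
    (Ω₀ : Set (EuclideanSpace ℝ (Fin N))) (hΩ₀ : Ω₀ = ⋃ i, Ωi i)
    (F : Fin k → ℝ → ℝ) (hFcont : ∀ i, Continuous (F i))
    (hF0 : ∀ i, F i 0 = 0)
    (A : Fin k → ℝ) (hA : ∀ i, 0 < A i)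
    (μi : Fin k → ℝ) (hμi : ∀ i, μi i = F i (A i) - (A i) ^ 2 / 2)
    (hF2 : ∀ i, ∀ t : ℝ, 0 ≤ t → F i t - t ^ 2 / 2 ≤ μi i)
    (φ : Fin k → EuclideanSpace ℝ (Fin N) → ℝ)
    (hφ : ∀ i, ContDiff ℝ 1 (φ i))
    (L : Fin k → ℝ)
    (hφbd : ∀ i, ∀ x, 0 ≤ φ i x ∧ φ i x ≤ A i)
    (hφgrad : ∀ i, ∀ x, ‖fderiv ℝ (φ i) x‖ ≤ L i)
    (hφKi : ∀ i, ∀ x ∈ Ωi i, φ i x = A i)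
    (hφKj : ∀ i j, j ≠ i → ∀ x ∈ Ωi j, φ i x = 0)
    (hφseg : ∀ i j, i ≠ j → ∀ x, φ i x * φ j x = 0)
    (R : Set (EuclideanSpace ℝ (Fin N))) (hR : MeasurableSet R)
    (hRbdd : Bornology.IsBounded R) (hRdisj : R ⊆ Ω₀ᶜ)
    (Ωε : Set (EuclideanSpace ℝ (Fin N))) (hΩε : Ωε = Ω₀ ∪ R)
    (μ : ℝ) (hμ : μ = -∑ i, μi i * (volume (Ωi i)).toReal)
    (M : ℝ)
    (hM : M = ∑ i, (1 / 2 * (L i) ^ 2 + 1 / 2 * (A i) ^ 2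
      + sSup ((fun t => |F i t|) '' Set.Icc 0 (A i)))) :
    (∑ i, ∫ x in Ωε,
        (1 / 2 * ‖fderiv ℝ (φ i) x‖ ^ 2 + 1 / 2 * (φ i x) ^ 2 - F i (φ i x)))
      ≤ μ + M * (volume R).toReal :=
  stmt_19_general Ωi hΩopen hΩbdd hΩdisj Ω₀ hΩ₀ F hFcont hF0 A μi hμi φ hφ L hφbd hφgrad hφKi hφKj R
    hR hRbdd hRdisj Ωε hΩε μ hμ M hM
end
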